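/- Define, for a CM γ_N = [[A_N, C_N],[C_Nᵀ, B_N]] (with γ_N ≥ iJ), the map producing γ_{N+1} with blocks A_{N+1} = B_{N+1} = A_N − Re(X_N) and C_{N+1} = −Im(X_N), where X_N = C_N (B_N − iJ)⁻¹ C_Nᵀ (pseudoinverse). Suppose γ_N ≥ γ_A ⊕ γ_B for CMs γ_A (2n×2n) and γ_B (2m×2m). Then γ_{N+1} ≥ γ_A ⊕ γ_A. -/

import Mathlib

open Matrix
open scoped Classical ComplexOrder

noncomputable section

/-- Embed a real matrix into the complex matrices. -/
def toC {k l : ℕ} (A : Matrix (Fin k) (Fin l) ℝ) : Matrix (Fin k) (Fin l) ℂ :=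
  A.map Complex.ofReal

/-- The standard symplectic form `Jₙ = ⊕ₖ [[0,-1],[1,0]]` on `ℝ^{2n}`. -/
def J (n : ℕ) : Matrix (Fin (2*n)) (Fin (2*n)) ℝ :=
  Matrix.of fun i j =>
    if i.val + 1 = j.val ∧ i.val % 2 = 0 then -1
    else if j.val + 1 = i.val ∧ j.val % 2 = 0 then 1 else 0

/-- A correlation matrix (CM): a real symmetric `2n×2n` matrix with `γ - iJₙ ≥ 0`. -/
def IsCM {n : ℕ} (γ : Matrix (Fin (2*n)) (Fin (2*n)) ℝ) : Prop :=
  γ.IsSymm ∧ (toC γ - Complex.I • toC (J n)).PosSemidef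

/-- The operator norm (largest singular value) of a real matrix. -/
def opNorm {n m : ℕ} (C : Matrix (Fin n) (Fin m) ℝ) : ℝ :=
  ‖(Matrix.toEuclideanLin (𝕜 := ℝ) C).toContinuousLinearMap‖

/-- The square root of a positive semidefinite matrix (the former `Matrix.PosSemidef.sqrt`). -/
def PosSemidef.sqrt {k : Type*} [Fintype k] [DecidableEq k] {𝕜 : Type*} [RCLike 𝕜]
    {A : Matrix k k 𝕜} (hA : A.PosSemidef) : Matrix k k 𝕜 :=
  hA.1.eigenvectorUnitary.1 * diagonal ((↑) ∘ (√·) ∘ hA.1.eigenvalues) *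
    (star hA.1.eigenvectorUnitary : Matrix k k 𝕜)

/-- The trace norm (sum of singular values) of a real square matrix. -/
def trNorm {k : ℕ} (A : Matrix (Fin k) (Fin k) ℝ) : ℝ :=
  (PosSemidef.sqrt (Matrix.posSemidef_conjTranspose_mul_self A)).trace

/-- The trace norm of a complex square matrix. -/
def trNormC {k : ℕ} (A : Matrix (Fin k) (Fin k) ℂ) : ℝ :=
  ((PosSemidef.sqrt (Matrix.posSemidef_conjTranspose_mul_self A)).trace).re

/-- The Moore–Penrose pseudoinverse of a real matrix. -/
def pinvR {n m : ℕ} (A : Matrix (Fin n) (Fin m) ℝ) : Matrix (Fin m) (Fin n) ℝ :=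
  if h : ∃ B : Matrix (Fin m) (Fin n) ℝ,
      A * B * A = A ∧ B * A * B = B ∧ (A * B)ᵀ = A * B ∧ (B * A)ᵀ = B * A
  then h.choose else 0

/-- The Moore–Penrose pseudoinverse of a complex matrix. -/
def pinvC {n m : ℕ} (A : Matrix (Fin n) (Fin m) ℂ) : Matrix (Fin m) (Fin n) ℂ :=
  if h : ∃ B : Matrix (Fin m) (Fin n) ℂ,
      A * B * A = A ∧ B * A * B = B ∧ (A * B)ᴴ = A * B ∧ (B * A)ᴴ = B * A
  then h.choose else 0

/-- Real part of a complex matrix. -/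
def reM {k l : ℕ} (X : Matrix (Fin k) (Fin l) ℂ) : Matrix (Fin k) (Fin l) ℝ :=
  Matrix.of fun i j => (X i j).re

/-- Imaginary part of a complex matrix. -/
def imM {k l : ℕ} (X : Matrix (Fin k) (Fin l) ℂ) : Matrix (Fin k) (Fin l) ℝ :=
  Matrix.of fun i j => (X i j).im

/-- `X = C (B − iJₘ)⁻ Cᵀ` appearing in the nonlinear map. -/
def Xmap {n m : ℕ} (B : Matrix (Fin (2*m)) (Fin (2*m)) ℝ)
    (C : Matrix (Fin (2*n)) (Fin (2*m)) ℝ) : Matrix (Fin (2*n)) (Fin (2*n)) ℂ :=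
  toC C * pinvC (toC B - Complex.I • toC (J m)) * toC Cᵀ

/-- `A_{N+1} = A_N − Re(X_N)`. -/
def nextA {n m : ℕ} (A : Matrix (Fin (2*n)) (Fin (2*n)) ℝ)
    (B : Matrix (Fin (2*m)) (Fin (2*m)) ℝ) (C : Matrix (Fin (2*n)) (Fin (2*m)) ℝ) :
    Matrix (Fin (2*n)) (Fin (2*n)) ℝ :=
  A - reM (Xmap B C)

/-- `C_{N+1} = −Im(X_N)`. -/
def nextC {n m : ℕ} (B : Matrix (Fin (2*m)) (Fin (2*m)) ℝ)
    (C : Matrix (Fin (2*n)) (Fin (2*m)) ℝ) : Matrix (Fin (2*n)) (Fin (2*n)) ℝ :=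
  - imM (Xmap B C)

/-- CM predicate for a bipartite block-indexed real matrix, w.r.t. `Jₙ ⊕ Jₘ`. -/
def IsCM2 {n m : ℕ} (γ : Matrix (Fin (2*n) ⊕ Fin (2*m)) (Fin (2*n) ⊕ Fin (2*m)) ℝ) : Prop :=
  γ.IsSymm ∧ (γ.map Complex.ofReal -
    Complex.I • (fromBlocks (J n) 0 0 (J m)).map Complex.ofReal).PosSemidef

/-- Separability of a bipartite CM: `γ ≥ γ_A ⊕ γ_B` for some CMs `γ_A, γ_B`. -/
def SepCM {n m : ℕ} (γ : Matrix (Fin (2*n) ⊕ Fin (2*m)) (Fin (2*n) ⊕ Fin (2*m)) ℝ) : Prop :=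
  ∃ (γA : Matrix (Fin (2*n)) (Fin (2*n)) ℝ) (γB : Matrix (Fin (2*m)) (Fin (2*m)) ℝ),
    IsCM γA ∧ IsCM γB ∧ (γ - fromBlocks γA 0 0 γB).PosSemidef

/-- The block matrix `[[A, C],[Cᵀ, A]]` built from the pair `(A, C)`. -/
def γmat {n : ℕ} (p : Matrix (Fin (2*n)) (Fin (2*n)) ℝ × Matrix (Fin (2*n)) (Fin (2*n)) ℝ) :
    Matrix (Fin (2*n) ⊕ Fin (2*n)) (Fin (2*n) ⊕ Fin (2*n)) ℝ :=
  fromBlocks p.1 p.2 p.2ᵀ p.1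

/-- The iterated sequence: `seq A0 B0 C0 N = (A_{N+1}, C_{N+1})`; the map gives `0`
whenever the current matrix is not a CM. -/
def seq {n m : ℕ} (A0 : Matrix (Fin (2*n)) (Fin (2*n)) ℝ)
    (B0 : Matrix (Fin (2*m)) (Fin (2*m)) ℝ) (C0 : Matrix (Fin (2*n)) (Fin (2*m)) ℝ) :
    ℕ → Matrix (Fin (2*n)) (Fin (2*n)) ℝ × Matrix (Fin (2*n)) (Fin (2*n)) ℝ
  | 0 => if IsCM2 (fromBlocks A0 C0 C0ᵀ B0) then (nextA A0 B0 C0, nextC B0 C0) else (0, 0)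
  | (N+1) => if IsCM2 (γmat (seq A0 B0 C0 N)) then
      (nextA (seq A0 B0 C0 N).1 (seq A0 B0 C0 N).1 (seq A0 B0 C0 N).2,
       nextC (seq A0 B0 C0 N).1 (seq A0 B0 C0 N).2)
    else (0, 0)

/-!
Adding `0 ⊕ (γ_B - iJ) ≥ 0` to `γ_N - γ_A ⊕ γ_B ≥ 0` gives
`[[A_N - γ_A, C_N], [C_Nᵀ, B_N - iJ]] ≥ 0`. Its Schur complement with respect to the
Moore–Penrose inverse of the Hermitian block `B_N - iJ` is
`A_N - γ_A - X_N = (A_{N+1} - γ_A) + i C_{N+1} ≥ 0`. Finally, a complex Hermitian `R + iS ≥ 0`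
yields the real matrix `[[R, S], [Sᵀ, R]] ≥ 0`, the real part of `L (R + iS) Lᴴ` for
`L = [1; i]`, and this matrix is `γ_{N+1} - γ_A ⊕ γ_A`.
-/

section MoorePenrose

variable {α : Type*} [CommRing α] [StarRing α] {m n : Type*} [Fintype m] [Fintype n]

def IsMoorePenroseInverse (A : Matrix m n α) (B : Matrix n m α) : Prop :=
  A * B * A = A ∧ B * A * B = B ∧ (A * B)ᴴ = A * B ∧ (B * A)ᴴ = B * A

namespace IsMoorePenroseInverse

variable {A : Matrix m n α} {B C : Matrix n m α}

theorem unique (hB : IsMoorePenroseInverse A B) (hC : IsMoorePenroseInverse A C) : B = C := by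
  obtain ⟨hB₁, hB₂, hB₃, hB₄⟩ := hB
  obtain ⟨hC₁, hC₂, hC₃, hC₄⟩ := hC
  have hAB : A * B = A * C :=
    calc A * B = (A * C)ᴴ * (A * B)ᴴ := by rw [hC₃, hB₃, ← Matrix.mul_assoc, hC₁]
    _ = A * C := by rw [← conjTranspose_mul, ← Matrix.mul_assoc, hB₁, hC₃]
  have hBA : B * A = C * A :=
    calc B * A = (B * A)ᴴ * (C * A)ᴴ := by
          rw [hB₄, hC₄, Matrix.mul_assoc, ← Matrix.mul_assoc A, hC₁]
    _ = C * A := by rw [← conjTranspose_mul, Matrix.mul_assoc, ← Matrix.mul_assoc A, hB₁, hC₄]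
  calc B = C * A * B := by rw [← hBA, hB₂]
  _ = C := by rw [Matrix.mul_assoc, hAB, ← Matrix.mul_assoc, hC₂]

theorem conjTranspose (h : IsMoorePenroseInverse A B) : IsMoorePenroseInverse Aᴴ Bᴴ := by
  obtain ⟨h₁, h₂, h₃, h₄⟩ := h
  refine ⟨?_, ?_, ?_, ?_⟩
  · simpa only [conjTranspose_mul, Matrix.mul_assoc] using congrArg Matrix.conjTranspose h₁
  · simpa only [conjTranspose_mul, Matrix.mul_assoc] using congrArg Matrix.conjTranspose h₂
  · rw [← conjTranspose_mul, h₄, h₄]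
  · rw [← conjTranspose_mul, h₃, h₃]

theorem conjTranspose_eq_self {A B : Matrix n n α} (hA : A.IsHermitian)
    (h : IsMoorePenroseInverse A B) : Bᴴ = B :=
  (hA.eq ▸ h.conjTranspose).unique h

theorem map {F : Type*} [FunLike F (Matrix n n α) (Matrix n n α)] [MulHomClass F _ _]
    [StarHomClass F _ _] (f : F) {A B : Matrix n n α} (h : IsMoorePenroseInverse A B) :
    IsMoorePenroseInverse (f A) (f B) := by
  obtain ⟨h₁, h₂, h₃, h₄⟩ := h
  refine ⟨?_, ?_, ?_, ?_⟩
  · rw [← map_mul, ← map_mul, h₁]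
  · rw [← map_mul, ← map_mul, h₂]
  · rw [← map_mul, ← star_eq_conjTranspose, ← map_star, star_eq_conjTranspose, h₃]
  · rw [← map_mul, ← star_eq_conjTranspose, ← map_star, star_eq_conjTranspose, h₄]

end IsMoorePenroseInverse

theorem isMoorePenroseInverse_diagonal {K : Type*} [Field K] [StarRing K] [DecidableEq n]
    (d : n → K) : IsMoorePenroseInverse (diagonal d) (diagonal d⁻¹) := by
  have hd : ∀ i, d i * (d i)⁻¹ * d i = d i ∧ (d i)⁻¹ * d i * (d i)⁻¹ = (d i)⁻¹ ∧
      star (d i * (d i)⁻¹) = d i * (d i)⁻¹ := fun i => by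
    by_cases h : d i = 0 <;> simp [h]
  refine ⟨?_, ?_, ?_, ?_⟩ <;>
    simp only [diagonal_mul_diagonal, diagonal_conjTranspose] <;> congr 1 <;> funext i
  · exact (hd i).1
  · exact (hd i).2.1
  · exact (hd i).2.2
  · simpa only [Pi.star_apply, Pi.mul_apply, Pi.inv_apply, mul_comm] using (hd i).2.2

theorem Matrix.IsHermitian.exists_isMoorePenroseInverse {𝕜 : Type*} [RCLike 𝕜] [DecidableEq n]
    {A : Matrix n n 𝕜} (hA : A.IsHermitian) : ∃ B, IsMoorePenroseInverse A B := by
  rw [hA.spectral_theorem]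
  exact ⟨_, (isMoorePenroseInverse_diagonal _).map _⟩

theorem isMoorePenroseInverse_pinvC {k l : ℕ} {A : Matrix (Fin k) (Fin l) ℂ}
    (h : ∃ B, IsMoorePenroseInverse A B) : IsMoorePenroseInverse A (pinvC A) := by
  unfold IsMoorePenroseInverse at h ⊢
  rw [pinvC, dif_pos h]
  exact h.choose_spec

end MoorePenrose

section PosSemidef

variable {𝕜 : Type*} [RCLike 𝕜] {m n : Type*} [Fintype m] [Fintype n]

theorem Matrix.PosSemidef.schur_complement_of_isMoorePenroseInverse
    {P : Matrix m m 𝕜} {Q : Matrix m n 𝕜} {T B : Matrix n n 𝕜}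
    (hΓ : (fromBlocks P Q Qᴴ T).PosSemidef) (hB : IsMoorePenroseInverse T B) :
    (P - Q * B * Qᴴ).PosSemidef := by
  have hBh : Bᴴ = B := hB.conjTranspose_eq_self (hΓ.submatrix Sum.inr).1
  have hBTB : Q * B * T * (B * Qᴴ) = Q * B * Qᴴ := by
    rw [← Matrix.mul_assoc, Matrix.mul_assoc Q B T, Matrix.mul_assoc Q, hB.2.1, Matrix.mul_assoc]
  have hconj : fromCols (1 : Matrix m m 𝕜) (-(Q * B)) * fromBlocks P Q Qᴴ T *
      (fromCols (1 : Matrix m m 𝕜) (-(Q * B)))ᴴ = P - Q * B * Qᴴ := by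
    rw [conjTranspose_fromCols_eq_fromRows_conjTranspose, fromCols_mul_fromBlocks,
      fromCols_mul_fromRows, conjTranspose_neg, conjTranspose_mul, hBh]
    simp only [conjTranspose_one, Matrix.one_mul, Matrix.mul_one, Matrix.neg_mul, Matrix.mul_neg,
      Matrix.add_mul, Matrix.mul_assoc] at hBTB ⊢
    rw [hBTB]
    abel
  exact hconj ▸ hΓ.mul_mul_conjTranspose_same _

theorem Matrix.posSemidef_fromBlocks_zero_zero_zero {M : Matrix n n 𝕜} (hM : M.PosSemidef) :
    (fromBlocks (0 : Matrix m m 𝕜) 0 0 M).PosSemidef := by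
  have h := hM.conjTranspose_mul_mul_same (fromCols (0 : Matrix n m 𝕜) (1 : Matrix n n 𝕜))
  rw [conjTranspose_fromCols_eq_fromRows_conjTranspose, fromRows_mul, fromRows_mul_fromCols] at h
  simpa using h

end PosSemidef

section Realification

variable {ι : Type*} [Fintype ι]

theorem Matrix.PosSemidef.map_ofReal {M : Matrix ι ι ℝ} (hM : M.PosSemidef) :
    (M.map Complex.ofReal).PosSemidef := by
  obtain ⟨B, rfl⟩ : ∃ B : Matrix ι ι ℝ, M = star B * B := by
    open scoped MatrixOrder in exact CStarAlgebra.nonneg_iff_eq_star_mul_self.mp hM.nonneg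
  have e : (star B * B).map Complex.ofReal = (B.map Complex.ofReal)ᴴ * B.map Complex.ofReal := by
    ext i j
    simp [Matrix.mul_apply]
  exact e ▸ posSemidef_conjTranspose_mul_self _

theorem Matrix.PosSemidef.map_re {M : Matrix ι ι ℂ} (hM : M.PosSemidef) :
    (M.map Complex.re).PosSemidef := by
  refine .of_dotProduct_mulVec_nonneg ?_ fun x => ?_
  · ext i j
    simpa using congrArg Complex.re (hM.1.apply i j)
  · have key : star x ⬝ᵥ M.map Complex.re *ᵥ x
        = RCLike.re (star (fun i => (x i : ℂ)) ⬝ᵥ M *ᵥ fun i => (x i : ℂ)) := by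
      simp [dotProduct, mulVec, Finset.mul_sum, RCLike.re_to_complex]
    exact key ▸ hM.re_dotProduct_nonneg _

theorem Matrix.posSemidef_fromBlocks_of_posSemidef_sub_I_smul {R S : Matrix ι ι ℝ}
    (h : (R.map Complex.ofReal - Complex.I • S.map Complex.ofReal).PosSemidef) :
    (fromBlocks R (-S) (-S)ᵀ R).PosSemidef := by
  have hS : ∀ i j, S j i = - S i j := fun i j => by
    simpa using congrArg Complex.im (h.1.apply i j)
  set L : Matrix (ι ⊕ ι) ι ℂ := fromRows 1 (Complex.I • 1)
  convert (h.mul_mul_conjTranspose_same L).map_re using 1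
  rw [conjTranspose_fromRows_eq_fromCols_conjTranspose, fromRows_mul, fromRows_mul_fromCols]
  ext (i | i) (j | j) <;> simp [hS i j]

end Realification

theorem prop2_general {n m : ℕ} (AN : Matrix (Fin (2*n)) (Fin (2*n)) ℝ)
    (BN : Matrix (Fin (2*m)) (Fin (2*m)) ℝ) (CN : Matrix (Fin (2*n)) (Fin (2*m)) ℝ)
    (γA : Matrix (Fin (2*n)) (Fin (2*n)) ℝ) (γB : Matrix (Fin (2*m)) (Fin (2*m)) ℝ)
    (hγB : IsCM γB)
    (hsep : (Matrix.fromBlocks AN CN CNᵀ BN - Matrix.fromBlocks γA 0 0 γB).PosSemidef) :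
    (Matrix.fromBlocks (nextA AN BN CN) (nextC BN CN) (nextC BN CN)ᵀ (nextA AN BN CN)
      - Matrix.fromBlocks γA 0 0 γA).PosSemidef := by
  have hCT : (toC CN)ᴴ = toC CNᵀ := by
    ext i j
    simp [toC]
  have hΓ : (fromBlocks (toC (AN - γA)) (toC CN) (toC CN)ᴴ
      (toC BN - Complex.I • toC (J m))).PosSemidef := by
    convert hsep.map_ofReal.add (posSemidef_fromBlocks_zero_zero_zero (m := Fin (2*n)) hγB.2)
      using 1
    rw [hCT]
    ext (i | i) (j | j) <;> simp [toC]
  have hschur := hΓ.schur_complement_of_isMoorePenroseInverse <|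
    isMoorePenroseInverse_pinvC (hΓ.submatrix Sum.inr).1.exists_isMoorePenroseInverse
  have hsplit : toC (AN - γA) - toC CN * pinvC (toC BN - Complex.I • toC (J m)) * (toC CN)ᴴ
      = toC (nextA AN BN CN - γA) - Complex.I • toC (imM (Xmap BN CN)) := by
    rw [hCT, ← Xmap]
    ext i j
    apply Complex.ext
    · simp [toC, nextA, reM, sub_right_comm]
    · simp [toC, imM]
  convert posSemidef_fromBlocks_of_posSemidef_sub_I_smul (hsplit ▸ hschur) using 1
  ext (i | i) (j | j) <;> simp [nextC]

/-- Prop. 2: if the CM `γ_N = [[A_N,C_N],[C_Nᵀ,B_N]]` satisfies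
`γ_N ≥ γ_A ⊕ γ_B` for CMs `γ_A, γ_B`, then `γ_{N+1} ≥ γ_A ⊕ γ_A`. -/
theorem prop2 {n m : ℕ} (AN : Matrix (Fin (2*n)) (Fin (2*n)) ℝ)
    (BN : Matrix (Fin (2*m)) (Fin (2*m)) ℝ) (CN : Matrix (Fin (2*n)) (Fin (2*m)) ℝ)
    (hCM : IsCM2 (Matrix.fromBlocks AN CN CNᵀ BN))
    (γA : Matrix (Fin (2*n)) (Fin (2*n)) ℝ) (γB : Matrix (Fin (2*m)) (Fin (2*m)) ℝ)
    (hγA : IsCM γA) (hγB : IsCM γB)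
    (hsep : (Matrix.fromBlocks AN CN CNᵀ BN - Matrix.fromBlocks γA 0 0 γB).PosSemidef) :
    (Matrix.fromBlocks (nextA AN BN CN) (nextC BN CN) (nextC BN CN)ᵀ (nextA AN BN CN)
      - Matrix.fromBlocks γA 0 0 γA).PosSemidef :=
  prop2_general AN BN CN γA γB hγB hsep
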